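/- arXiv:2301.03399 — 5 statements merged into one kernel-verified Lean document; each statement's English description precedes it below -/
import Mathlib

section
/- Assume in addition that σ₀²‖h₀‖² ≥ σ_j²τ_j‖h_j‖² for the index j under consideration. Then for every v > 0, SIR_j(Γ_R(v)) > SIR_j(Γ_E(v)); that is, the Riemannian-mean-based delay-and-sum beam pattern achieves a strictly higher output signal-to-interference ratio toward interference j than its Euclidean counterpart. -/
open Matrix Finset Filter Topology

noncomputable section

/-- squared Euclidean norm of a complex vector. -/
def nsq {M : ℕ} (x : Fin M → ℂ) : ℝ := ∑ i, Complex.normSq (x i)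

/-- outer product `x x*`. -/
def outerP {M : ℕ} (x : Fin M → ℂ) : Matrix (Fin M) (Fin M) ℂ :=
  Matrix.vecMulVec x (star x)

/-- the (real) quadratic form `d* A d`. -/
def quadForm {M : ℕ} (d : Fin M → ℂ) (A : Matrix (Fin M) (Fin M) ℂ) : ℝ :=
  (star d ⬝ᵥ (A *ᵥ d)).re

/-- `Γ(c, v) = σ₀² h₀h₀* + ∑ l, c_l h_l h_l* + v I`.  Index `0` is the desired source and
index `l.succ` is the `l`-th interference. -/
def Gam {M N : ℕ} (h : Fin (N + 1) → Fin M → ℂ) (σ0sq : ℝ) (c : Fin N → ℝ) (v : ℝ) :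
    Matrix (Fin M) (Fin M) ℂ :=
  σ0sq • outerP (h 0) + ∑ l : Fin N, c l • outerP (h l.succ)
    + v • (1 : Matrix (Fin M) (Fin M) ℂ)

/-- output SIR toward interference `j`: `q(d₀, Γ) / q(d_j, Γ)`. -/
def SIRj {M N : ℕ} (d : Fin (N + 1) → Fin M → ℂ) (j : Fin N)
    (A : Matrix (Fin M) (Fin M) ℂ) : ℝ :=
  quadForm (d 0) A / quadForm (d j.succ) A

/-- the Riemannian interference coefficients
`c_l^R(v) = ((σ_l²‖h_l‖² + v)^{τ_l} v^{1-τ_l} - v)/‖h_l‖²`. -/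
def cRcoef {M N : ℕ} (h : Fin (N + 1) → Fin M → ℂ) (σsq τ : Fin N → ℝ) (v : ℝ)
    (l : Fin N) : ℝ :=
  ((σsq l * nsq (h l.succ) + v) ^ (τ l) * v ^ (1 - τ l) - v) / nsq (h l.succ)

lemma nsq_pos {M : ℕ} {x : Fin M → ℂ} (hx : x ≠ 0) : 0 < nsq x := by
  obtain ⟨i, hi⟩ := Function.ne_iff.mp hx
  exact Finset.sum_pos' (fun k _ => Complex.normSq_nonneg _)
    ⟨i, Finset.mem_univ i, by simpa [Complex.normSq_pos] using hi⟩

lemma quadForm_add {M : ℕ} (e : Fin M → ℂ) (A B : Matrix (Fin M) (Fin M) ℂ) :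
    quadForm e (A + B) = quadForm e A + quadForm e B := by
  simp [quadForm, Matrix.add_mulVec, dotProduct_add]

lemma quadForm_smul {M : ℕ} (e : Fin M → ℂ) (r : ℝ) (A : Matrix (Fin M) (Fin M) ℂ) :
    quadForm e (r • A) = r * quadForm e A := by
  simp [quadForm, Matrix.smul_mulVec, dotProduct_smul, Complex.smul_re]

lemma quadForm_sum {M N : ℕ} (e : Fin M → ℂ) (A : Fin N → Matrix (Fin M) (Fin M) ℂ) :
    quadForm e (∑ l, A l) = ∑ l, quadForm e (A l) :=
  map_sum (AddMonoidHom.mk' (quadForm e) (fun A B => quadForm_add e A B)) A univ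

lemma quadForm_one {M : ℕ} (e : Fin M → ℂ) : quadForm e 1 = nsq e := by
  simp [quadForm, Matrix.one_mulVec, dotProduct, nsq, Complex.re_sum,
    ← Complex.normSq_eq_conj_mul_self]

lemma quadForm_outerP {M : ℕ} (e x : Fin M → ℂ) :
    quadForm e (outerP x) = ‖star e ⬝ᵥ x‖ ^ 2 := by
  have h1 : outerP x *ᵥ e = (star x ⬝ᵥ e) • x := by
    funext i
    simp only [outerP, Matrix.mulVec, Matrix.vecMulVec_apply, dotProduct, Pi.star_apply,
      Pi.smul_apply, smul_eq_mul, Finset.sum_mul]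
    exact Finset.sum_congr rfl fun k _ => by ring
  have h2 : star x ⬝ᵥ e = starRingEnd ℂ (star e ⬝ᵥ x) := by
    simp [dotProduct, map_sum, mul_comm]
  rw [quadForm, h1, dotProduct_smul, h2]
  have h3 : starRingEnd ℂ (star e ⬝ᵥ x) • (star e ⬝ᵥ x)
      = (Complex.normSq (star e ⬝ᵥ x) : ℂ) := by
    simp [smul_eq_mul, Complex.normSq_eq_conj_mul_self]
  rw [h3, Complex.ofReal_re, Complex.normSq_eq_norm_sq]

lemma quadForm_Gam {M N : ℕ} (h : Fin (N + 1) → Fin M → ℂ) (σ0sq : ℝ) (c : Fin N → ℝ)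
    (v : ℝ) (e : Fin M → ℂ) :
    quadForm e (Gam h σ0sq c v)
      = σ0sq * ‖star e ⬝ᵥ h 0‖ ^ 2 + (∑ l, c l * ‖star e ⬝ᵥ h l.succ‖ ^ 2) + v * nsq e := by
  rw [Gam, quadForm_add, quadForm_add, quadForm_smul, quadForm_smul, quadForm_one,
    quadForm_sum, quadForm_outerP]
  congr 1
  congr 1
  exact Finset.sum_congr rfl fun l _ => by rw [quadForm_smul, quadForm_outerP]

lemma amgm_strict (x y t : ℝ) (hy : 0 < y) (hxy : y < x) (ht : 0 < t) (ht1 : t < 1) :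
    x ^ t * y ^ (1 - t) < t * x + (1 - t) * y := by
  have hx : 0 < x := hy.trans hxy
  have hcc := strictConcaveOn_log_Ioi.2 (Set.mem_Ioi.2 hx) (Set.mem_Ioi.2 hy)
    (ne_of_gt hxy) ht (show (0:ℝ) < 1 - t by linarith) (by ring)
  simp only [smul_eq_mul] at hcc
  have h1 : x ^ t * y ^ (1 - t) = Real.exp (t * Real.log x + (1 - t) * Real.log y) := by
    rw [Real.rpow_def_of_pos hx, Real.rpow_def_of_pos hy, ← Real.exp_add]
    ring_nf
  have hpos : 0 < t * x + (1 - t) * y := by nlinarith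
  rw [h1]
  calc Real.exp (t * Real.log x + (1 - t) * Real.log y)
      < Real.exp (Real.log (t * x + (1 - t) * y)) := Real.exp_lt_exp.2 hcc
    _ = t * x + (1 - t) * y := Real.exp_log hpos

lemma amgm_lower (x y t : ℝ) (hy : 0 < y) (hxy : y ≤ x) (ht : 0 ≤ t) :
    y ≤ x ^ t * y ^ (1 - t) := by
  have h1 : y ^ t * y ^ (1 - t) = y := by
    rw [← Real.rpow_add hy]; norm_num
  calc y = y ^ t * y ^ (1 - t) := h1.symm
    _ ≤ x ^ t * y ^ (1 - t) :=
      mul_le_mul_of_nonneg_right (Real.rpow_le_rpow hy.le hxy ht)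
        (Real.rpow_nonneg hy.le _)

lemma key_frac (κ ρ a bR bE BR BE v : ℝ) (hρ : 0 ≤ ρ) (hκρ : ρ < κ)
    (hv : 0 < v) (hbR : 0 ≤ bR) (hb : bR < bE) (hBEa : bE ≤ a)
    (hBRb : bR ≤ BR) (hC : BR - bR ≤ BE - bE) :
    (κ * a + ρ * BE + v) / (ρ * a + ρ * BE + (κ - ρ) * bE + v)
      < (κ * a + ρ * BR + v) / (ρ * a + ρ * BR + (κ - ρ) * bR + v) := by
  have ha : 0 < a := lt_of_lt_of_le (hbR.trans_lt hb) hBEa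
  have hBR : 0 ≤ BR := hbR.trans hBRb
  have hBE : bE ≤ BE := by linarith
  have hD1 : 0 < ρ * a + ρ * BR + (κ - ρ) * bR + v := by nlinarith
  have hD2 : 0 < ρ * a + ρ * BE + (κ - ρ) * bE + v := by nlinarith
  rw [div_lt_div_iff₀ hD2 hD1]
  nlinarith [mul_nonneg (mul_nonneg hρ (by linarith : (0:ℝ) ≤ BE - BR))
      (mul_nonneg (by linarith : (0:ℝ) ≤ κ - ρ) (by linarith : (0:ℝ) ≤ a - bR)),
    mul_pos (mul_pos (by linarith : (0:ℝ) < κ - ρ) (by linarith : (0:ℝ) < bE - bR))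
      (by nlinarith : (0:ℝ) < κ * a + ρ * BR + v)]

/-- If `σ₀²‖h₀‖² ≥ σ_j² τ_j ‖h_j‖²`, then for every noise power `v > 0`
the Riemannian-mean-based DS beam pattern has strictly higher output SIR toward
interference `j` than its Euclidean counterpart: `SIR_j(Γ_R(v)) > SIR_j(Γ_E(v))`. -/
theorem riemannian_SIR_gt_euclidean_SIR
    (M N : ℕ) (hM : 1 ≤ M) (hN : 1 ≤ N)
    (h : Fin (N + 1) → Fin M → ℂ)
    (hnz : ∀ r, h r ≠ 0)
    (horth : ∀ r s, r ≠ s → star (h r) ⬝ᵥ h s = 0)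
    (d : Fin (N + 1) → Fin M → ℂ)
    (κ ρ : ℝ) (hρ : 0 ≤ ρ) (hκρ : ρ < κ)
    (hd : ∀ r, nsq (d r) = M)
    (hdr : ∀ r, ‖star (d r) ⬝ᵥ h r‖ ^ 2 = κ * M * nsq (h r))
    (hds : ∀ r s, r ≠ s → ‖star (d r) ⬝ᵥ h s‖ ^ 2 = ρ * M * nsq (h s))
    (σ0sq : ℝ) (hσ0 : 0 < σ0sq)
    (σsq : Fin N → ℝ) (hσ : ∀ l, 0 < σsq l)
    (τ : Fin N → ℝ) (hτ : ∀ l, τ l ∈ Set.Ioo (0 : ℝ) 1)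
    (j : Fin N)
    (hdom : σsq j * τ j * nsq (h j.succ) ≤ σ0sq * nsq (h 0)) :
    ∀ v : ℝ, 0 < v →
      SIRj d j (Gam h σ0sq (fun l => σsq l * τ l) v)
        < SIRj d j (Gam h σ0sq (cRcoef h σsq τ v) v) := by
  intro v hv
  have hMpos : (0:ℝ) < (M:ℝ) := by exact_mod_cast Nat.lt_of_lt_of_le Nat.zero_lt_one hM
  have hH : ∀ r : Fin (N+1), 0 < nsq (h r) := fun r => nsq_pos (hnz r)
  -- SIR computation
  have hquad : ∀ c : Fin N → ℝ,
      SIRj d j (Gam h σ0sq c v)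
        = ((M:ℝ) * (κ * (σ0sq * nsq (h 0)) + ρ * (∑ l, c l * nsq (h l.succ)) + v))
          / ((M:ℝ) * (ρ * (σ0sq * nsq (h 0)) + ρ * (∑ l, c l * nsq (h l.succ))
              + (κ - ρ) * (c j * nsq (h j.succ)) + v)) := by
    intro c
    rw [SIRj, quadForm_Gam, quadForm_Gam]
    congr 1
    · rw [hdr 0, hd 0]
      rw [Finset.sum_congr rfl
        (fun l _ => by rw [hds 0 l.succ (Fin.succ_ne_zero l).symm] :
          ∀ l ∈ univ, c l * ‖star (d 0) ⬝ᵥ h l.succ‖ ^ 2 = c l * (ρ * M * nsq (h l.succ)))]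
      have hsum : ∑ l, c l * (ρ * (M:ℝ) * nsq (h l.succ))
          = (M:ℝ) * (ρ * ∑ l, c l * nsq (h l.succ)) := by
        rw [Finset.mul_sum, Finset.mul_sum]
        exact Finset.sum_congr rfl fun l _ => by ring
      rw [hsum]; ring
    · rw [hds j.succ 0 (Fin.succ_ne_zero j), hd j.succ]
      have hterm : ∀ l : Fin N, c l * ‖star (d j.succ) ⬝ᵥ h l.succ‖ ^ 2
          = (M:ℝ) * (ρ * (c l * nsq (h l.succ)))
            + (if l = j then (κ - ρ) * ((M:ℝ) * (c l * nsq (h l.succ))) else 0) := by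
        intro l
        by_cases hl : l = j
        · subst hl
          rw [hdr l.succ, if_pos rfl]; ring
        · rw [hds j.succ l.succ (fun he => hl (Fin.succ_injective _ he).symm), if_neg hl]
          ring
      rw [Finset.sum_congr rfl fun l _ => hterm l, Finset.sum_add_distrib,
        Finset.sum_ite_eq' Finset.univ j, if_pos (Finset.mem_univ j),
        ← Finset.mul_sum, ← Finset.mul_sum]
      ring
  rw [hquad, hquad, mul_div_mul_left _ _ (ne_of_gt hMpos), mul_div_mul_left _ _ (ne_of_gt hMpos)]
  -- coefficient facts
  have hR0 : ∀ l, 0 ≤ cRcoef h σsq τ v l * nsq (h l.succ) := by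
    intro l
    rw [cRcoef, div_mul_cancel₀ _ (ne_of_gt (hH l.succ))]
    have := amgm_lower (σsq l * nsq (h l.succ) + v) v (τ l) hv
      (by nlinarith [hH l.succ, hσ l]) (hτ l).1.le
    linarith
  have hRE : ∀ l, cRcoef h σsq τ v l * nsq (h l.succ) < σsq l * τ l * nsq (h l.succ) := by
    intro l
    rw [cRcoef, div_mul_cancel₀ _ (ne_of_gt (hH l.succ))]
    have := amgm_strict (σsq l * nsq (h l.succ) + v) v (τ l) hv
      (by nlinarith [hH l.succ, hσ l]) (hτ l).1 (hτ l).2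
    nlinarith
  have hBRb : cRcoef h σsq τ v j * nsq (h j.succ)
      ≤ ∑ l, cRcoef h σsq τ v l * nsq (h l.succ) :=
    Finset.single_le_sum (fun l _ => hR0 l) (Finset.mem_univ j)
  have hC : (∑ l, cRcoef h σsq τ v l * nsq (h l.succ)) - cRcoef h σsq τ v j * nsq (h j.succ)
      ≤ (∑ l, σsq l * τ l * nsq (h l.succ)) - σsq j * τ j * nsq (h j.succ) := by
    have h2 : σsq j * τ j * nsq (h j.succ) - cRcoef h σsq τ v j * nsq (h j.succ)
        ≤ ∑ l, (σsq l * τ l * nsq (h l.succ) - cRcoef h σsq τ v l * nsq (h l.succ)) :=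
      Finset.single_le_sum (f := fun l => σsq l * τ l * nsq (h l.succ) - cRcoef h σsq τ v l * nsq (h l.succ)) (fun l _ => sub_nonneg.2 (hRE l).le) (Finset.mem_univ j)
    rw [Finset.sum_sub_distrib] at h2
    linarith
  exact key_frac κ ρ (σ0sq * nsq (h 0)) (cRcoef h σsq τ v j * nsq (h j.succ))
    (σsq j * τ j * nsq (h j.succ)) (∑ l, cRcoef h σsq τ v l * nsq (h l.succ))
    (∑ l, σsq l * τ l * nsq (h l.succ)) v hρ hκρ hv (hR0 j) (hRE j) hdom hBRb hC
end
end

section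
/- Let τ ∈ (0, 1/2). For any sequences (a_n) and (v_n) of positive reals with a_n → ∞, v_n → 0, and the products a_n·v_n bounded, one has (a_n + v_n)^τ · (v_n)^{1−τ} − v_n → 0. Consequently, in the vanishing-noise regime the Riemannian interference coefficient c^R = ((σ²‖h‖² + v)^τ v^{1−τ} − v)/‖h‖² tends to 0 even when the interference power σ² tends to infinity, provided the interference is active during fewer than half of the segments (τ < 1/2). -/
open Matrix Finset Filter Topology

noncomputable section

/-- Let `τ ∈ (0, 1/2)`. If `aₙ → ∞`, `vₙ → 0` with `aₙ, vₙ > 0` and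
`aₙ vₙ` bounded, then `(aₙ + vₙ)^τ vₙ^{1-τ} - vₙ → 0`; consequently the Riemannian
interference coefficient `((aₙ + vₙ)^τ vₙ^{1-τ} - vₙ)/‖h‖²` (with `aₙ = σₙ²‖h‖²`)
tends to `0` even though the interference power tends to infinity, provided `τ < 1/2`. -/
theorem coefficient_vanishes_for_strong_interference
    (τ : ℝ) (hτ0 : 0 < τ) (hτ : τ < 1 / 2)
    (a v : ℕ → ℝ) (hapos : ∀ n, 0 < a n) (hvpos : ∀ n, 0 < v n)
    (ha : Tendsto a atTop atTop) (hv : Tendsto v atTop (𝓝 0))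
    (hbd : ∃ C : ℝ, ∀ n, a n * v n ≤ C)
    (M : ℕ) (h : Fin M → ℂ) (hnz : h ≠ 0) :
    Tendsto (fun n => (a n + v n) ^ τ * (v n) ^ (1 - τ) - v n) atTop (𝓝 0) ∧
    Tendsto (fun n => ((a n + v n) ^ τ * (v n) ^ (1 - τ) - v n) / nsq h) atTop (𝓝 0) := by
  obtain ⟨C, hC⟩ := hbd
  have hCpos : 0 < C := lt_of_lt_of_le (mul_pos (hapos 0) (hvpos 0)) (hC 0)
  have h2τ : 0 < 1 - 2 * τ := by linarith
  have hmain : Tendsto (fun n => (a n + v n) ^ τ * (v n) ^ (1 - τ) - v n) atTop (𝓝 0) := by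
    have hg : Tendsto (fun n => (C + 1) ^ τ * (v n) ^ (1 - 2 * τ)) atTop (𝓝 0) := by
      have := (hv.rpow_const (p := 1 - 2*τ) (Or.inr h2τ.le)).const_mul ((C + 1) ^ τ)
      simpa [Real.zero_rpow (ne_of_gt h2τ)] using this
    have hev : ∀ᶠ n in atTop, v n < 1 := hv.eventually (eventually_lt_nhds (by norm_num : (0:ℝ) < 1))
    refine squeeze_zero' ?_ ?_ hg
    · filter_upwards with n
      have h1 : (v n) ^ τ ≤ (a n + v n) ^ τ :=
        Real.rpow_le_rpow (hvpos n).le (by linarith [(hapos n).le]) hτ0.le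
      have h2 : (v n : ℝ) = (v n) ^ τ * (v n) ^ (1 - τ) := by
        rw [← Real.rpow_add (hvpos n)]; norm_num
      have := mul_le_mul_of_nonneg_right h1 (Real.rpow_nonneg (hvpos n).le (1 - τ))
      linarith [h2 ▸ this]
    · filter_upwards [hev] with n hn
      have hsum : a n + v n ≤ (C + 1) / v n := by
        rw [le_div_iff₀ (hvpos n)]
        have : v n * v n ≤ 1 := by nlinarith [(hvpos n).le]
        nlinarith [hC n]
      have h1 : (a n + v n) ^ τ ≤ ((C + 1) / v n) ^ τ :=
        Real.rpow_le_rpow (by linarith [(hapos n).le, (hvpos n).le]) hsum hτ0.le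
      have h2 : ((C + 1) / v n) ^ τ = (C + 1) ^ τ * ((v n) ^ τ)⁻¹ := by
        rw [Real.div_rpow (by linarith) (hvpos n).le]; ring
      have h3 : (v n) ^ (1 - τ) = (v n) ^ τ * (v n) ^ (1 - 2 * τ) := by
        rw [← Real.rpow_add (hvpos n)]; ring_nf
      have hvt : (0:ℝ) < (v n) ^ τ := Real.rpow_pos_of_pos (hvpos n) τ
      have := mul_le_mul_of_nonneg_right h1 (Real.rpow_nonneg (hvpos n).le (1 - τ))
      calc (a n + v n) ^ τ * (v n) ^ (1 - τ) - v n
          ≤ ((C + 1) / v n) ^ τ * (v n) ^ (1 - τ) := by linarith [(hvpos n).le]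
        _ = (C + 1) ^ τ * (v n) ^ (1 - 2 * τ) := by
            rw [h2, h3]; field_simp
  exact ⟨hmain, by simpa using hmain.div_const (nsq h)⟩
end
end

section
/- Assume ρ > 0 and fix j ∈ {1,…,N}. For the optimal matrix Γ_opt(v) = σ₀²·h₀h₀* + v·I one has SIR_j(Γ_opt(v)) = (σ₀²κ‖h₀‖² + v)/(σ₀²ρ‖h₀‖² + v) for every v > 0, and SIR_j(Γ_opt(v)) → κ/ρ as v → 0⁺; in particular this limit is strictly greater than 1. -/
open Matrix Finset Filter Topology

noncomputable section

lemma outerP_mulVec {M : ℕ} (x d : Fin M → ℂ) :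
    outerP x *ᵥ d = (star x ⬝ᵥ d) • x := by
  funext i
  simp only [outerP, mulVec, vecMulVec_apply, dotProduct, Pi.smul_apply, smul_eq_mul,
    Finset.sum_mul]
  exact Finset.sum_congr rfl fun j _ => by ring

lemma quad_eval {M : ℕ} (x d : Fin M → ℂ) (a v : ℝ) :
    quadForm d (a • outerP x + v • (1 : Matrix (Fin M) (Fin M) ℂ))
      = a * ‖star d ⬝ᵥ x‖ ^ 2 + v * nsq d := by
  unfold quadForm
  rw [Matrix.add_mulVec, Matrix.smul_mulVec, Matrix.smul_mulVec,
    Matrix.one_mulVec, outerP_mulVec, dotProduct_add, dotProduct_smul, dotProduct_smul,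
    dotProduct_smul, star_dotProduct]
  have h1 : (star (star d ⬝ᵥ x)) • (star d ⬝ᵥ x) = (Complex.normSq (star d ⬝ᵥ x) : ℂ) := by
    rw [smul_eq_mul, Complex.normSq_eq_conj_mul_self]; rfl
  have h2 : star d ⬝ᵥ d = (nsq d : ℂ) := by
    simp [dotProduct, nsq, Complex.normSq_eq_conj_mul_self, Pi.star_apply]
  rw [h1, h2]
  simp [Complex.normSq_eq_norm_sq, Complex.smul_re, ← Complex.ofReal_pow]

/-- Assume `ρ > 0`. For `Γ_opt(v) = σ₀² h₀h₀* + v I` one has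
`SIR_j(Γ_opt(v)) = (σ₀²κ‖h₀‖² + v)/(σ₀²ρ‖h₀‖² + v)` for every `v > 0`, and
`SIR_j(Γ_opt(v)) → κ/ρ` as `v → 0⁺`; in particular this limit is strictly greater
than `1`. -/
theorem SIR_of_opt_formula_and_limit
    (M N : ℕ) (hM : 1 ≤ M) (hN : 1 ≤ N)
    (h : Fin (N + 1) → Fin M → ℂ)
    (hnz : ∀ r, h r ≠ 0)
    (horth : ∀ r s, r ≠ s → star (h r) ⬝ᵥ h s = 0)
    (d : Fin (N + 1) → Fin M → ℂ)
    (κ ρ : ℝ) (hρ : 0 < ρ) (hκρ : ρ < κ)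
    (hd : ∀ r, nsq (d r) = M)
    (hdr : ∀ r, ‖star (d r) ⬝ᵥ h r‖ ^ 2 = κ * M * nsq (h r))
    (hds : ∀ r s, r ≠ s → ‖star (d r) ⬝ᵥ h s‖ ^ 2 = ρ * M * nsq (h s))
    (σ0sq : ℝ) (hσ0 : 0 < σ0sq)
    (j : Fin N)
    (Γopt : ℝ → Matrix (Fin M) (Fin M) ℂ)
    (hΓopt : ∀ v, Γopt v = σ0sq • outerP (h 0) + v • (1 : Matrix (Fin M) (Fin M) ℂ)) :
    (∀ v : ℝ, 0 < v →
      SIRj d j (Γopt v)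
        = (σ0sq * κ * nsq (h 0) + v) / (σ0sq * ρ * nsq (h 0) + v)) ∧
    Tendsto (fun v => SIRj d j (Γopt v)) (𝓝[>] (0 : ℝ)) (𝓝 (κ / ρ)) ∧
    1 < κ / ρ := by
  have hMpos : (0 : ℝ) < M := by exact_mod_cast hM
  -- nsq (h 0) > 0
  have hn0 : 0 < nsq (h 0) := by
    rcases Function.ne_iff.mp (hnz 0) with ⟨i, hi⟩
    have h1 : 0 < Complex.normSq (h 0 i) := by
      simpa [Complex.normSq_pos] using hi
    have h2 : Complex.normSq (h 0 i) ≤ nsq (h 0) :=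
      Finset.single_le_sum (fun k _ => Complex.normSq_nonneg _) (Finset.mem_univ i)
    linarith
  have hjs : (j.succ : Fin (N + 1)) ≠ 0 := Fin.succ_ne_zero j
  -- main formula
  have key : ∀ v : ℝ, 0 < v →
      SIRj d j (Γopt v)
        = (σ0sq * κ * nsq (h 0) + v) / (σ0sq * ρ * nsq (h 0) + v) := by
    intro v hv
    have q0 : quadForm (d 0) (Γopt v) = M * (σ0sq * κ * nsq (h 0) + v) := by
      rw [hΓopt, quad_eval, hdr 0, hd 0]; ring
    have qj : quadForm (d j.succ) (Γopt v) = M * (σ0sq * ρ * nsq (h 0) + v) := by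
      rw [hΓopt, quad_eval, hds j.succ 0 hjs, hd j.succ]; ring
    rw [SIRj, q0, qj, mul_div_mul_left _ _ (ne_of_gt hMpos)]
  refine ⟨key, ?_, (one_lt_div hρ).mpr hκρ⟩
  -- the limit
  have hden : σ0sq * ρ * nsq (h 0) ≠ 0 := by positivity
  have hlim : Tendsto (fun v : ℝ => (σ0sq * κ * nsq (h 0) + v) / (σ0sq * ρ * nsq (h 0) + v))
      (𝓝 (0 : ℝ)) (𝓝 (κ / ρ)) := by
    have : Tendsto (fun v : ℝ => (σ0sq * κ * nsq (h 0) + v) / (σ0sq * ρ * nsq (h 0) + v))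
        (𝓝 (0 : ℝ)) (𝓝 ((σ0sq * κ * nsq (h 0) + 0) / (σ0sq * ρ * nsq (h 0) + 0))) := by
      apply Tendsto.div
      · exact tendsto_const_nhds.add tendsto_id
      · exact tendsto_const_nhds.add tendsto_id
      · simpa using hden
    convert this using 2
    rw [add_zero, add_zero]
    field_simp
  refine Tendsto.congr' ?_ (hlim.mono_left nhdsWithin_le_nhds)
  filter_upwards [self_mem_nhdsWithin] with v hv
  exact (key v hv).symm
end
end

section
/- Let h₀, h₁, h₂ ∈ ℂ^M be nonzero and pairwise orthogonal, let σ₀², σ₁², σ₂², v > 0, and for α ∈ [0,1] define Γ₁(α) = σ₀²h₀h₀* + α²σ₁²h₁h₁* + (1−α)²σ₂²h₂h₂* + v·I and Γ₂(α) = σ₀²h₀h₀* + (1−α)²σ₁²h₁h₁* + α²σ₂²h₂h₂* + v·I. Let Γ_R(α) = Γ₁(α)^{1/2}·Γ₂(α)^{1/2} (the Riemannian mean; Γ₁(α) and Γ₂(α) commute) and Γ_E(α) = (Γ₁(α) + Γ₂(α))/2. Assume steering vectors d₀, d₁, d₂ with ‖d_r‖² = M, |⟨d_r,h_r⟩|²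 = κM‖h_r‖², |⟨d_r,h_s⟩|² = ρM‖h_s‖² for r ≠ s, 0 ≤ ρ < κ, and assume σ₀²‖h₀‖² ≥ (σ_j²/2)(α² + (1−α)²)‖h_j‖² for j = 1, 2. Then for j = 1, 2, SIR_j(Γ_R(α)) ≥ SIR_j(Γ_E(α)), where SIR_j(Γ) = (d₀*Γd₀)/(d_j*Γd_j). -/
open Matrix Finset
open scoped ComplexOrder

noncomputable section

/-- `A ^ t` for a Hermitian matrix `A`, via the functional calculus applied to the
eigenvalues (junk value `0` if `A` is not Hermitian); for `t = 1/2` and `A` HPD this is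
the unique HPD square root. -/
def mpow {n : ℕ} (A : Matrix (Fin n) (Fin n) ℂ) (t : ℝ) : Matrix (Fin n) (Fin n) ℂ :=
  if hA : A.IsHermitian then hA.cfc (fun x => x ^ t) else 0

namespace SirAux

variable {M : ℕ}

lemma nsq_nonneg (x : Fin M → ℂ) : 0 ≤ nsq x :=
  Finset.sum_nonneg fun i _ => Complex.normSq_nonneg _

lemma nsq_pos {x : Fin M → ℂ} (hx : x ≠ 0) : 0 < nsq x := by
  rcases Function.ne_iff.mp hx with ⟨i, hi⟩
  exact Finset.sum_pos' (fun j _ => Complex.normSq_nonneg _)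
    ⟨i, Finset.mem_univ i, Complex.normSq_pos.mpr hi⟩

lemma star_dot_self (x : Fin M → ℂ) : star x ⬝ᵥ x = (nsq x : ℂ) := by
  simp only [dotProduct, nsq, Complex.ofReal_sum, Pi.star_apply]
  exact Finset.sum_congr rfl fun i _ => by
    rw [Complex.star_def, mul_comm, Complex.mul_conj]

lemma real_smul_eq (r : ℝ) (A : Matrix (Fin M) (Fin M) ℂ) : r • A = (r : ℂ) • A := by
  ext i j
  simp [Complex.real_smul]

lemma outerP_mulVec (x d : Fin M → ℂ) : outerP x *ᵥ d = (star x ⬝ᵥ d) • x := by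
  ext i
  simp only [outerP, Matrix.mulVec, dotProduct, Matrix.vecMulVec_apply, Pi.smul_apply,
    smul_eq_mul]
  rw [Finset.sum_mul]
  exact Finset.sum_congr rfl fun k _ => by ring

lemma dot_outerP (d x : Fin M → ℂ) :
    star d ⬝ᵥ (outerP x *ᵥ d) = ((‖star d ⬝ᵥ x‖ ^ 2 : ℝ) : ℂ) := by
  rw [outerP_mulVec, dotProduct_smul, smul_eq_mul]
  have h1 : star x ⬝ᵥ d = (starRingEnd ℂ) (star d ⬝ᵥ x) := by
    simp only [dotProduct, map_sum, Pi.star_apply, Complex.star_def]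
    exact Finset.sum_congr rfl fun i _ => by
      rw [map_mul (starRingEnd ℂ), Complex.conj_conj]; ring
  rw [h1, mul_comm, Complex.mul_conj]
  norm_cast
  rw [Complex.normSq_eq_norm_sq]

lemma outerP_mul_outerP (x y : Fin M → ℂ) :
    outerP x * outerP y = (star x ⬝ᵥ y) • Matrix.vecMulVec x (star y) := by
  ext i j
  simp only [outerP, Matrix.mul_apply, Matrix.vecMulVec_apply, Matrix.smul_apply, dotProduct,
    smul_eq_mul, Finset.sum_mul]
  exact Finset.sum_congr rfl fun k _ => by ring

lemma outerP_mul_self (x : Fin M → ℂ) :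
    outerP x * outerP x = (nsq x : ℂ) • outerP x := by
  rw [outerP_mul_outerP, star_dot_self]; rfl

lemma outerP_herm (x : Fin M → ℂ) : (outerP x).IsHermitian := by
  ext i j
  simp only [outerP, Matrix.conjTranspose_apply, Matrix.vecMulVec_apply, Pi.star_apply,
    Complex.star_def]
  rw [map_mul (starRingEnd ℂ), Complex.conj_conj]
  ring



def triFormC (h : Fin 3 → Fin M → ℂ) (c : Fin 3 → ℂ) (u : ℂ) : Matrix (Fin M) (Fin M) ℂ :=
  c 0 • outerP (h 0) + c 1 • outerP (h 1) + c 2 • outerP (h 2) + u • (1 : Matrix (Fin M) (Fin M) ℂ)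

lemma triFormC_mul (h : Fin 3 → Fin M → ℂ)
    (horth : ∀ r s, r ≠ s → star (h r) ⬝ᵥ h s = 0) (a b : Fin 3 → ℂ) (u w : ℂ) :
    triFormC h a u * triFormC h b w
      = triFormC h (fun r => a r * b r * (nsq (h r) : ℂ) + a r * w + u * b r) (u * w) := by
  have hz : ∀ r s : Fin 3, r ≠ s → outerP (h r) * outerP (h s) = 0 := fun r s hrs => by
    rw [outerP_mul_outerP, horth r s hrs, zero_smul]
  have h01 := hz 0 1 (by decide); have h02 := hz 0 2 (by decide)
  have h10 := hz 1 0 (by decide); have h12 := hz 1 2 (by decide)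
  have h20 := hz 2 0 (by decide); have h21 := hz 2 1 (by decide)
  have e0 := outerP_mul_self (h 0); have e1 := outerP_mul_self (h 1)
  have e2 := outerP_mul_self (h 2)
  simp only [triFormC, add_mul, mul_add, smul_mul_assoc, Matrix.mul_smul, one_mul, mul_one,
    h01, h02, h10, h12, h20, h21, e0, e1, e2, smul_zero, add_zero, zero_add, smul_smul]
  module

lemma triFormC_dot (h : Fin 3 → Fin M → ℂ) (c : Fin 3 → ℝ) (u : ℝ) (y : Fin M → ℂ) :
    star y ⬝ᵥ (triFormC h (fun r => (c r : ℂ)) (u : ℂ) *ᵥ y)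
      = ((c 0 * ‖star y ⬝ᵥ h 0‖ ^ 2 + c 1 * ‖star y ⬝ᵥ h 1‖ ^ 2
          + c 2 * ‖star y ⬝ᵥ h 2‖ ^ 2 + u * nsq y : ℝ) : ℂ) := by
  simp only [triFormC, Matrix.add_mulVec, Matrix.smul_mulVec, Matrix.one_mulVec,
    dotProduct_add, dotProduct_smul, smul_eq_mul, dot_outerP, star_dot_self]
  push_cast
  ring

lemma triFormC_psd (h : Fin 3 → Fin M → ℂ) (c : Fin 3 → ℝ) (u : ℝ)
    (hc : ∀ r, 0 ≤ c r) (hu : 0 ≤ u) :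
    (triFormC h (fun r => (c r : ℂ)) (u : ℂ)).PosSemidef := by
  rw [Matrix.posSemidef_iff_dotProduct_mulVec]
  constructor
  · have hherm : ∀ (z : ℝ) (B : Matrix (Fin M) (Fin M) ℂ), B.IsHermitian →
        ((z : ℂ) • B).IsHermitian := by
      intro z B hB
      rw [Matrix.IsHermitian, Matrix.conjTranspose_smul, hB]
      simp [Complex.star_def]
    exact (((hherm _ _ (outerP_herm _)).add (hherm _ _ (outerP_herm _))).add
      (hherm _ _ (outerP_herm _))).add (hherm _ _ Matrix.isHermitian_one)
  · intro y
    rw [triFormC_dot, Complex.zero_le_real]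
    have h0 := mul_nonneg (hc 0) (sq_nonneg ‖star y ⬝ᵥ h 0‖)
    have h1 := mul_nonneg (hc 1) (sq_nonneg ‖star y ⬝ᵥ h 1‖)
    have h2 := mul_nonneg (hc 2) (sq_nonneg ‖star y ⬝ᵥ h 2‖)
    have h3 := mul_nonneg hu (nsq_nonneg y)
    linarith

lemma quadForm_triFormC (d : Fin M → ℂ) (h : Fin 3 → Fin M → ℂ) (c : Fin 3 → ℝ) (u : ℝ) :
    quadForm d (triFormC h (fun r => (c r : ℂ)) (u : ℂ))
      = c 0 * ‖star d ⬝ᵥ h 0‖ ^ 2 + c 1 * ‖star d ⬝ᵥ h 1‖ ^ 2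
          + c 2 * ‖star d ⬝ᵥ h 2‖ ^ 2 + u * nsq d := by
  rw [quadForm, triFormC_dot, Complex.ofReal_re]

open scoped MatrixOrder in
lemma mpow_half {A : Matrix (Fin M) (Fin M) ℂ} (hA : A.PosSemidef) :
    mpow A (2 : ℝ)⁻¹ = CFC.sqrt A := by
  rw [mpow, dif_pos hA.1]
  rw [← hA.1.cfc_eq, CFC.sqrt_eq_real_sqrt A (Matrix.nonneg_iff_posSemidef.mpr hA),
    cfcₙ_eq_cfc (hf := Real.continuous_sqrt.continuousOn) (hf0 := Real.sqrt_zero)]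
  have : (fun x : ℝ => x ^ ((2:ℝ)⁻¹)) = Real.sqrt := by
    funext i
    rw [show ((2 : ℝ)⁻¹) = 1 / 2 by norm_num, ← Real.sqrt_eq_rpow]
  rw [this]


lemma amgm (a b : ℝ) (ha : 0 ≤ a) (hb : 0 ≤ b) :
    Real.sqrt a * Real.sqrt b ≤ (a + b) / 2 := by
  nlinarith [Real.sq_sqrt ha, Real.sq_sqrt hb, sq_nonneg (Real.sqrt a - Real.sqrt b)]

lemma key_ineq (Mr v κ ρ e0 e1 e2 r1 r2 : ℝ) (hM : 0 < Mr) (hv : 0 < v) (hρ : 0 ≤ ρ)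
    (hκρ : ρ < κ) (he0 : 0 ≤ e0) (hr1 : 0 ≤ r1) (hr2 : 0 ≤ r2) (h1 : r1 ≤ e1) (h2 : r2 ≤ e2)
    (hd1 : e1 ≤ e0) :
    Mr * (v + κ * e0 + ρ * e1 + ρ * e2) / (Mr * (v + ρ * e0 + κ * e1 + ρ * e2))
      ≤ Mr * (v + κ * e0 + ρ * r1 + ρ * r2) / (Mr * (v + ρ * e0 + κ * r1 + ρ * r2)) := by
  rw [mul_div_mul_left _ _ (ne_of_gt hM), mul_div_mul_left _ _ (ne_of_gt hM)]
  have hκ : 0 < κ := lt_of_le_of_lt hρ hκρ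
  have he1 : 0 ≤ e1 := le_trans hr1 h1
  have he2 : 0 ≤ e2 := le_trans hr2 h2
  have hdenE : 0 < v + ρ * e0 + κ * e1 + ρ * e2 := by
    have := mul_nonneg hρ he0
    have := mul_nonneg hκ.le he1
    have := mul_nonneg hρ he2
    linarith
  have hdenR : 0 < v + ρ * e0 + κ * r1 + ρ * r2 := by
    have := mul_nonneg hρ he0
    have := mul_nonneg hκ.le hr1
    have := mul_nonneg hρ hr2
    linarith
  rw [div_le_div_iff₀ hdenE hdenR]
  have t1 : 0 ≤ (κ * (v + κ * e0) - ρ * (v + ρ * e0) + ρ * (κ - ρ) * r2) * (e1 - r1) := by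
    apply mul_nonneg _ (by linarith)
    nlinarith [mul_nonneg (sub_nonneg.2 hκρ.le) hv.le,
      mul_nonneg (mul_nonneg (sub_nonneg.2 hκρ.le) (by linarith : (0:ℝ) ≤ κ + ρ)) he0,
      mul_nonneg (mul_nonneg hρ (sub_nonneg.2 hκρ.le)) hr2]
  have t2 : 0 ≤ ρ * (κ - ρ) * ((e0 - r1) * (e2 - r2)) := by
    apply mul_nonneg (mul_nonneg hρ (by linarith))
    apply mul_nonneg <;> linarith
  nlinarith [t1, t2]

lemma sq_coeff (l wv n v : ℝ) (hn : n ≠ 0) (hv : 0 ≤ v) (hl : 0 ≤ l) (hlw : l = wv * n + v) :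
    ((Real.sqrt l - Real.sqrt v) / n) * ((Real.sqrt l - Real.sqrt v) / n) * n
      + ((Real.sqrt l - Real.sqrt v) / n) * Real.sqrt v
      + Real.sqrt v * ((Real.sqrt l - Real.sqrt v) / n) = wv := by
  have h1 : Real.sqrt l ^ 2 = l := Real.sq_sqrt hl
  have h2 : Real.sqrt v ^ 2 = v := Real.sq_sqrt hv
  field_simp
  linear_combination (h1 - h2 + hlw)

lemma sqrt_coeff2 (l1 l2 v n : ℝ) (hn : n ≠ 0) (hv : 0 ≤ v) :
    ((Real.sqrt l1 - Real.sqrt v) / n) * ((Real.sqrt l2 - Real.sqrt v) / n) * n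
      + ((Real.sqrt l1 - Real.sqrt v) / n) * Real.sqrt v
      + Real.sqrt v * ((Real.sqrt l2 - Real.sqrt v) / n)
      = (Real.sqrt l1 * Real.sqrt l2 - v) / n := by
  have h2 : Real.sqrt v ^ 2 = v := Real.sq_sqrt hv
  field_simp
  linear_combination (-1 : ℝ) * h2

end SirAux

/-- With an offset `α ∈ [0,1]` between the segments and the activity of
the two interference sources, the Riemannian mean `Γ_R(α) = Γ₁(α)^{1/2} Γ₂(α)^{1/2}` gives
an output SIR at least as large as the Euclidean mean `Γ_E(α) = (Γ₁(α) + Γ₂(α))/2`, toward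
both interferences `j = 1, 2`. -/
theorem riemannian_SIR_ge_euclidean_SIR_with_offset
    (M : ℕ) (hM : 1 ≤ M)
    (h : Fin 3 → Fin M → ℂ)
    (hnz : ∀ r, h r ≠ 0)
    (horth : ∀ r s, r ≠ s → star (h r) ⬝ᵥ h s = 0)
    (d : Fin 3 → Fin M → ℂ)
    (κ ρ : ℝ) (hρ : 0 ≤ ρ) (hκρ : ρ < κ)
    (hd : ∀ r, nsq (d r) = M)
    (hdr : ∀ r, ‖star (d r) ⬝ᵥ h r‖ ^ 2 = κ * M * nsq (h r))
    (hds : ∀ r s, r ≠ s → ‖star (d r) ⬝ᵥ h s‖ ^ 2 = ρ * M * nsq (h s))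
    (σsq : Fin 3 → ℝ) (hσ : ∀ r, 0 < σsq r)
    (v : ℝ) (hv : 0 < v)
    (α : ℝ) (hα : α ∈ Set.Icc (0 : ℝ) 1)
    (hdom : ∀ j : Fin 3, j ≠ 0 →
      σsq j / 2 * (α ^ 2 + (1 - α) ^ 2) * nsq (h j) ≤ σsq 0 * nsq (h 0))
    (Γ₁ Γ₂ : Matrix (Fin M) (Fin M) ℂ)
    (hΓ₁ : Γ₁ = σsq 0 • outerP (h 0) + (α ^ 2 * σsq 1) • outerP (h 1)
        + ((1 - α) ^ 2 * σsq 2) • outerP (h 2) + v • (1 : Matrix (Fin M) (Fin M) ℂ))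
    (hΓ₂ : Γ₂ = σsq 0 • outerP (h 0) + ((1 - α) ^ 2 * σsq 1) • outerP (h 1)
        + (α ^ 2 * σsq 2) • outerP (h 2) + v • (1 : Matrix (Fin M) (Fin M) ℂ))
    (ΓR ΓE : Matrix (Fin M) (Fin M) ℂ)
    (hΓR : ΓR = mpow Γ₁ ((2 : ℝ)⁻¹) * mpow Γ₂ ((2 : ℝ)⁻¹))
    (hΓE : ΓE = ((2 : ℝ)⁻¹) • (Γ₁ + Γ₂)) :
    ∀ j : Fin 3, j ≠ 0 →
      quadForm (d 0) ΓE / quadForm (d j) ΓE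
        ≤ quadForm (d 0) ΓR / quadForm (d j) ΓR := by
  intro j hj
  have h1M : (1 : ℝ) ≤ (M : ℝ) := by exact_mod_cast hM
  have hMpos : (0 : ℝ) < (M : ℝ) := lt_of_lt_of_le zero_lt_one h1M
  have hκ : 0 < κ := lt_of_le_of_lt hρ hκρ
  have hn : ∀ r, 0 < nsq (h r) := fun r => SirAux.nsq_pos (hnz r)
  set c1 : Fin 3 → ℝ := ![σsq 0, α ^ 2 * σsq 1, (1 - α) ^ 2 * σsq 2] with hc1def
  set c2 : Fin 3 → ℝ := ![σsq 0, (1 - α) ^ 2 * σsq 1, α ^ 2 * σsq 2] with hc2def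
  have hc1nn : ∀ r, 0 ≤ c1 r := by
    intro r; fin_cases r <;> simp [hc1def] <;>
      nlinarith [hσ 0, hσ 1, hσ 2, sq_nonneg α, sq_nonneg (1 - α),
        mul_nonneg (sq_nonneg α) (hσ 1).le, mul_nonneg (sq_nonneg (1 - α)) (hσ 2).le]
  have hc2nn : ∀ r, 0 ≤ c2 r := by
    intro r; fin_cases r <;> simp [hc2def] <;>
      nlinarith [hσ 0, hσ 1, hσ 2, sq_nonneg α, sq_nonneg (1 - α),
        mul_nonneg (sq_nonneg (1 - α)) (hσ 1).le, mul_nonneg (sq_nonneg α) (hσ 2).le]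
  set l1 : Fin 3 → ℝ := fun r => c1 r * nsq (h r) + v with hl1def
  set l2 : Fin 3 → ℝ := fun r => c2 r * nsq (h r) + v with hl2def
  have hl1v : ∀ r, v ≤ l1 r := by
    intro r
    have := mul_nonneg (hc1nn r) (hn r).le
    simp only [hl1def]; linarith
  have hl2v : ∀ r, v ≤ l2 r := by
    intro r
    have := mul_nonneg (hc2nn r) (hn r).le
    simp only [hl2def]; linarith
  have hl1pos : ∀ r, 0 < l1 r := fun r => lt_of_lt_of_le hv (hl1v r)
  have hl2pos : ∀ r, 0 < l2 r := fun r => lt_of_lt_of_le hv (hl2v r)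
  set a1 : Fin 3 → ℝ := fun r => (Real.sqrt (l1 r) - Real.sqrt v) / nsq (h r) with ha1def
  set a2 : Fin 3 → ℝ := fun r => (Real.sqrt (l2 r) - Real.sqrt v) / nsq (h r) with ha2def
  have ha1nn : ∀ r, 0 ≤ a1 r := by
    intro r
    have := Real.sqrt_le_sqrt (hl1v r)
    simp only [ha1def]
    exact div_nonneg (by linarith) (hn r).le
  have ha2nn : ∀ r, 0 ≤ a2 r := by
    intro r
    have := Real.sqrt_le_sqrt (hl2v r)
    simp only [ha2def]
    exact div_nonneg (by linarith) (hn r).le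
  have hΓ1' : Γ₁ = SirAux.triFormC h (fun r => ((c1 r : ℝ) : ℂ)) ((v : ℂ)) := by
    rw [hΓ₁]
    simp only [SirAux.triFormC, hc1def, Matrix.cons_val_zero, Matrix.cons_val_one,
      Matrix.head_cons, Matrix.cons_val_two, Matrix.tail_cons, SirAux.real_smul_eq]
  have hΓ2' : Γ₂ = SirAux.triFormC h (fun r => ((c2 r : ℝ) : ℂ)) ((v : ℂ)) := by
    rw [hΓ₂]
    simp only [SirAux.triFormC, hc2def, Matrix.cons_val_zero, Matrix.cons_val_one,
      Matrix.head_cons, Matrix.cons_val_two, Matrix.tail_cons, SirAux.real_smul_eq]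
  have hΓ1psd : Γ₁.PosSemidef := by
    rw [hΓ1']; exact SirAux.triFormC_psd h c1 v hc1nn hv.le
  have hΓ2psd : Γ₂.PosSemidef := by
    rw [hΓ2']; exact SirAux.triFormC_psd h c2 v hc2nn hv.le
  set S1 := SirAux.triFormC h (fun r => ((a1 r : ℝ) : ℂ)) ((Real.sqrt v : ℂ)) with hS1def
  set S2 := SirAux.triFormC h (fun r => ((a2 r : ℝ) : ℂ)) ((Real.sqrt v : ℂ)) with hS2def
  have hS1psd : S1.PosSemidef := SirAux.triFormC_psd h a1 (Real.sqrt v) ha1nn (Real.sqrt_nonneg v)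
  have hS2psd : S2.PosSemidef := SirAux.triFormC_psd h a2 (Real.sqrt v) ha2nn (Real.sqrt_nonneg v)
  have hS1sq : S1 ^ 2 = Γ₁ := by
    rw [pow_two, hS1def, SirAux.triFormC_mul h horth, hΓ1']
    refine congrArg₂ (SirAux.triFormC h) (funext fun r => ?_) ?_
    · 
      have key := SirAux.sq_coeff (l1 r) (c1 r) (nsq (h r)) v (hn r).ne' hv.le (hl1pos r).le
        (by simp only [hl1def])
      have : a1 r * a1 r * nsq (h r) + a1 r * Real.sqrt v + Real.sqrt v * a1 r = c1 r := by
        simp only [ha1def]; exact key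
      exact_mod_cast this
    · rw [show ((Real.sqrt v : ℂ)) * ((Real.sqrt v : ℂ)) = ((Real.sqrt v * Real.sqrt v : ℝ) : ℂ)
        by push_cast; ring, Real.mul_self_sqrt hv.le]
  have hS2sq : S2 ^ 2 = Γ₂ := by
    rw [pow_two, hS2def, SirAux.triFormC_mul h horth, hΓ2']
    refine congrArg₂ (SirAux.triFormC h) (funext fun r => ?_) ?_
    · 
      have key := SirAux.sq_coeff (l2 r) (c2 r) (nsq (h r)) v (hn r).ne' hv.le (hl2pos r).le
        (by simp only [hl2def])
      have : a2 r * a2 r * nsq (h r) + a2 r * Real.sqrt v + Real.sqrt v * a2 r = c2 r := by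
        simp only [ha2def]; exact key
      exact_mod_cast this
    · rw [show ((Real.sqrt v : ℂ)) * ((Real.sqrt v : ℂ)) = ((Real.sqrt v * Real.sqrt v : ℝ) : ℂ)
        by push_cast; ring, Real.mul_self_sqrt hv.le]
  set g : Fin 3 → ℝ := fun r => (Real.sqrt (l1 r) * Real.sqrt (l2 r) - v) / nsq (h r) with hgdef
  set gE : Fin 3 → ℝ := fun r => (c1 r + c2 r) / 2 with hgEdef
  have hRform : ΓR = SirAux.triFormC h (fun r => ((g r : ℝ) : ℂ)) ((v : ℂ)) := by
    open scoped MatrixOrder in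
    have e1 : S1 = CFC.sqrt Γ₁ := ((CFC.sqrt_eq_iff Γ₁ S1 (Matrix.nonneg_iff_posSemidef.mpr hΓ1psd)
      (Matrix.nonneg_iff_posSemidef.mpr hS1psd)).mpr (by rw [← pow_two]; exact hS1sq)).symm
    open scoped MatrixOrder in
    have e2 : S2 = CFC.sqrt Γ₂ := ((CFC.sqrt_eq_iff Γ₂ S2 (Matrix.nonneg_iff_posSemidef.mpr hΓ2psd)
      (Matrix.nonneg_iff_posSemidef.mpr hS2psd)).mpr (by rw [← pow_two]; exact hS2sq)).symm
    rw [hΓR, SirAux.mpow_half hΓ1psd, SirAux.mpow_half hΓ2psd, ← e1, ← e2, hS1def, hS2def,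
      SirAux.triFormC_mul h horth]
    refine congrArg₂ (SirAux.triFormC h) (funext fun r => ?_) ?_
    · 
      have key := SirAux.sqrt_coeff2 (l1 r) (l2 r) v (nsq (h r)) (hn r).ne' hv.le
      have : a1 r * a2 r * nsq (h r) + a1 r * Real.sqrt v + Real.sqrt v * a2 r = g r := by
        simp only [ha1def, ha2def, hgdef]; exact key
      exact_mod_cast this
    · rw [show ((Real.sqrt v : ℂ)) * ((Real.sqrt v : ℂ)) = ((Real.sqrt v * Real.sqrt v : ℝ) : ℂ)
        by push_cast; ring, Real.mul_self_sqrt hv.le]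
  have hEform : ΓE = SirAux.triFormC h (fun r => ((gE r : ℝ) : ℂ)) ((v : ℂ)) := by
    rw [hΓE, hΓ1', hΓ2']
    simp only [SirAux.triFormC, hgEdef, SirAux.real_smul_eq]
    push_cast
    module
  -- quadForm values
  have hQE0 : quadForm (d 0) ΓE
      = (M : ℝ) * (v + κ * (gE 0 * nsq (h 0)) + ρ * (gE 1 * nsq (h 1))
          + ρ * (gE 2 * nsq (h 2))) := by
    rw [hEform, SirAux.quadForm_triFormC, hdr 0, hds 0 1 (by decide), hds 0 2 (by decide), hd 0]
    ring
  have hQR0 : quadForm (d 0) ΓR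
      = (M : ℝ) * (v + κ * (g 0 * nsq (h 0)) + ρ * (g 1 * nsq (h 1))
          + ρ * (g 2 * nsq (h 2))) := by
    rw [hRform, SirAux.quadForm_triFormC, hdr 0, hds 0 1 (by decide), hds 0 2 (by decide), hd 0]
    ring
  -- scalar comparisons
  have hREle : ∀ r, g r * nsq (h r) ≤ gE r * nsq (h r) := by
    intro r
    rw [hgdef, hgEdef]
    simp only
    rw [div_mul_cancel₀ _ (hn r).ne']
    have am : Real.sqrt (l1 r) * Real.sqrt (l2 r) ≤ (l1 r + l2 r) / 2 :=
      SirAux.amgm _ _ (hl1pos r).le (hl2pos r).le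
    have hlin : (c1 r + c2 r) / 2 * nsq (h r) = (l1 r + l2 r) / 2 - v := by
      simp only [hl1def, hl2def]; ring
    linarith
  have hRnn : ∀ r, 0 ≤ g r * nsq (h r) := by
    intro r
    rw [hgdef]
    simp only
    rw [div_mul_cancel₀ _ (hn r).ne']
    have hmul : Real.sqrt v * Real.sqrt v ≤ Real.sqrt (l1 r) * Real.sqrt (l2 r) :=
      mul_le_mul (Real.sqrt_le_sqrt (hl1v r)) (Real.sqrt_le_sqrt (hl2v r))
        (Real.sqrt_nonneg v) (Real.sqrt_nonneg _)
    rw [Real.mul_self_sqrt hv.le] at hmul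
    linarith
  have hR0E0 : g 0 * nsq (h 0) = gE 0 * nsq (h 0) := by
    rw [hgdef, hgEdef]
    simp only
    rw [div_mul_cancel₀ _ (hn 0).ne']
    have hc : c1 0 = c2 0 := by simp [hc1def, hc2def]
    have hll : l1 0 = l2 0 := by simp only [hl1def, hl2def, hc]
    rw [hll, Real.mul_self_sqrt (hl2pos 0).le]
    simp only [hl2def]
    rw [← hc]
    ring
  have hgE0 : gE 0 = σsq 0 := by
    simp only [hgEdef, hc1def, hc2def, Matrix.cons_val_zero]
    ring
  have hgE1 : gE 1 = σsq 1 / 2 * (α ^ 2 + (1 - α) ^ 2) := by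
    simp only [hgEdef, hc1def, hc2def, Matrix.cons_val_one, Matrix.head_cons, Matrix.cons_val_zero]
    ring
  have hgE2 : gE 2 = σsq 2 / 2 * (α ^ 2 + (1 - α) ^ 2) := by
    simp only [hgEdef, hc1def, hc2def, Matrix.cons_val_two, Matrix.tail_cons, Matrix.head_cons]
    ring
  have hdomE1 : gE 1 * nsq (h 1) ≤ gE 0 * nsq (h 0) := by
    rw [hgE1, hgE0]
    exact hdom 1 (by decide)
  have hdomE2 : gE 2 * nsq (h 2) ≤ gE 0 * nsq (h 0) := by
    rw [hgE2, hgE0]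
    exact hdom 2 (by decide)
  have hRE1 := hREle 1
  have hRE2 := hREle 2
  have hR1nn := hRnn 1
  have hR2nn := hRnn 2
  have hE0nn : 0 ≤ gE 0 * nsq (h 0) := hR0E0 ▸ hRnn 0
  rw [hR0E0] at hQR0
  fin_cases j
  · exact absurd rfl hj
  · -- j = 1
    show quadForm (d 0) ΓE / quadForm (d 1) ΓE ≤ quadForm (d 0) ΓR / quadForm (d 1) ΓR
    have hQE1 : quadForm (d 1) ΓE
        = (M : ℝ) * (v + ρ * (gE 0 * nsq (h 0)) + κ * (gE 1 * nsq (h 1))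
            + ρ * (gE 2 * nsq (h 2))) := by
      rw [hEform, SirAux.quadForm_triFormC, hdr 1, hds 1 0 (by decide), hds 1 2 (by decide),
        hd 1]
      ring
    have hQR1 : quadForm (d 1) ΓR
        = (M : ℝ) * (v + ρ * (gE 0 * nsq (h 0)) + κ * (g 1 * nsq (h 1))
            + ρ * (g 2 * nsq (h 2))) := by
      rw [hRform, SirAux.quadForm_triFormC, hdr 1, hds 1 0 (by decide), hds 1 2 (by decide),
        hd 1, show (ρ : ℝ) * ↑M * nsq (h 0) = ρ * ↑M * nsq (h 0) from rfl]
      have : g 0 * (ρ * ↑M * nsq (h 0)) = gE 0 * nsq (h 0) * (ρ * ↑M) := by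
        rw [← hR0E0]; ring
      rw [this]
      ring
    rw [hQE0, hQE1, hQR0, hQR1]
    exact SirAux.key_ineq _ _ _ _ _ _ _ _ _ hMpos hv hρ hκρ hE0nn hR1nn hR2nn hRE1 hRE2 hdomE1
  · -- j = 2
    show quadForm (d 0) ΓE / quadForm (d 2) ΓE ≤ quadForm (d 0) ΓR / quadForm (d 2) ΓR
    have hQE0' : quadForm (d 0) ΓE
        = (M : ℝ) * (v + κ * (gE 0 * nsq (h 0)) + ρ * (gE 2 * nsq (h 2))
            + ρ * (gE 1 * nsq (h 1))) := by
      rw [hQE0]; ring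
    have hQR0' : quadForm (d 0) ΓR
        = (M : ℝ) * (v + κ * (gE 0 * nsq (h 0)) + ρ * (g 2 * nsq (h 2))
            + ρ * (g 1 * nsq (h 1))) := by
      rw [hQR0]; ring
    have hQE2 : quadForm (d 2) ΓE
        = (M : ℝ) * (v + ρ * (gE 0 * nsq (h 0)) + κ * (gE 2 * nsq (h 2))
            + ρ * (gE 1 * nsq (h 1))) := by
      rw [hEform, SirAux.quadForm_triFormC, hdr 2, hds 2 0 (by decide), hds 2 1 (by decide),
        hd 2]
      ring
    have hQR2 : quadForm (d 2) ΓR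
        = (M : ℝ) * (v + ρ * (gE 0 * nsq (h 0)) + κ * (g 2 * nsq (h 2))
            + ρ * (g 1 * nsq (h 1))) := by
      rw [hRform, SirAux.quadForm_triFormC, hdr 2, hds 2 0 (by decide), hds 2 1 (by decide),
        hd 2]
      have : g 0 * (ρ * ↑M * nsq (h 0)) = gE 0 * nsq (h 0) * (ρ * ↑M) := by
        rw [← hR0E0]; ring
      rw [this]
      ring
    rw [hQE0', hQE2, hQR0', hQR2]
    exact SirAux.key_ineq _ _ _ _ _ _ _ _ _ hMpos hv hρ hκρ hE0nn hR2nn hR1nn hRE2 hRE1 hdomE2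
end
end

section
/- For every choice of nonnegative coefficients c₁, …, c_N, every v > 0, and every j ∈ {1,…,N}, the output SIR admits the closed form SIR_j(Γ(c, v)) = 1 + ((σ₀²‖h₀‖² − c_j‖h_j‖²)·(κ − ρ)) / (σ₀²‖h₀‖²·ρ + Σ_{l ≠ j} c_l‖h_l‖²·ρ + c_j‖h_j‖²·κ + v), with the denominator strictly positive. -/
open Matrix Finset Filter Topology

noncomputable section

private lemma nsq_nonneg' {M : ℕ} (x : Fin M → ℂ) : 0 ≤ nsq x :=
  Finset.sum_nonneg fun _ _ => Complex.normSq_nonneg _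

private lemma quad_add {M : ℕ} (d : Fin M → ℂ) (A B : Matrix (Fin M) (Fin M) ℂ) :
    quadForm d (A + B) = quadForm d A + quadForm d B := by
  simp [quadForm, Matrix.add_mulVec, dotProduct_add]

private lemma quad_smul {M : ℕ} (d : Fin M → ℂ) (a : ℝ) (A : Matrix (Fin M) (Fin M) ℂ) :
    quadForm d (a • A) = a * quadForm d A := by
  simp [quadForm, Matrix.smul_mulVec, dotProduct_smul]

private lemma quad_one {M : ℕ} (d : Fin M → ℂ) :
    quadForm d (1 : Matrix (Fin M) (Fin M) ℂ) = nsq d := by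
  simp [quadForm, nsq, dotProduct, Complex.normSq, Complex.mul_re, Pi.star_apply,
    Complex.star_def]

private lemma quad_outer {M : ℕ} (d x : Fin M → ℂ) :
    quadForm d (outerP x) = ‖star d ⬝ᵥ x‖ ^ 2 := by
  have h1 : (outerP x) *ᵥ d = (star x ⬝ᵥ d) • x := by
    ext i
    simp [outerP, Matrix.mulVec, Matrix.vecMulVec, dotProduct, Finset.mul_sum]
    ring_nf
    rw [Finset.mul_sum]
    exact Finset.sum_congr rfl fun k _ => by ring
  have h2 : star x ⬝ᵥ d = starRingEnd ℂ (star d ⬝ᵥ x) := by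
    simp [dotProduct, map_sum, mul_comm]
  rw [quadForm, h1, dotProduct_smul, h2, smul_eq_mul, mul_comm, Complex.mul_conj']
  norm_cast

private lemma quad_sum {M : ℕ} (d : Fin M → ℂ) {ι : Type*} [DecidableEq ι] (s : Finset ι)
    (f : ι → Matrix (Fin M) (Fin M) ℂ) :
    quadForm d (∑ i ∈ s, f i) = ∑ i ∈ s, quadForm d (f i) := by
  induction s using Finset.induction with
  | empty => simp [quadForm]
  | insert a s hx ih => simp [Finset.sum_insert hx, quad_add, ih]

/-- Closed form for the output SIR: for all nonnegative coefficients
`c`, all `v > 0` and all `j`,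
`SIR_j(Γ(c,v)) = 1 + (σ₀²‖h₀‖² - c_j‖h_j‖²)(κ - ρ) / D` where
`D = σ₀²‖h₀‖² ρ + (∑_{l ≠ j} c_l‖h_l‖²) ρ + c_j‖h_j‖² κ + v > 0`. -/
theorem SIR_closed_form
    (M N : ℕ) (hM : 1 ≤ M) (hN : 1 ≤ N)
    (h : Fin (N + 1) → Fin M → ℂ)
    (hnz : ∀ r, h r ≠ 0)
    (horth : ∀ r s, r ≠ s → star (h r) ⬝ᵥ h s = 0)
    (d : Fin (N + 1) → Fin M → ℂ)
    (κ ρ : ℝ) (hρ : 0 ≤ ρ) (hκρ : ρ < κ)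
    (hd : ∀ r, nsq (d r) = M)
    (hdr : ∀ r, ‖star (d r) ⬝ᵥ h r‖ ^ 2 = κ * M * nsq (h r))
    (hds : ∀ r s, r ≠ s → ‖star (d r) ⬝ᵥ h s‖ ^ 2 = ρ * M * nsq (h s))
    (σ0sq : ℝ) (hσ0 : 0 < σ0sq) :
    ∀ c : Fin N → ℝ, (∀ l, 0 ≤ c l) → ∀ v : ℝ, 0 < v → ∀ j : Fin N,
      0 < σ0sq * nsq (h 0) * ρ + (∑ l ∈ univ.erase j, c l * nsq (h l.succ)) * ρ
            + c j * nsq (h j.succ) * κ + v ∧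
      SIRj d j (Gam h σ0sq c v)
        = 1 + (σ0sq * nsq (h 0) - c j * nsq (h j.succ)) * (κ - ρ)
            / (σ0sq * nsq (h 0) * ρ + (∑ l ∈ univ.erase j, c l * nsq (h l.succ)) * ρ
                + c j * nsq (h j.succ) * κ + v) := by
  intro c hc v hv j
  have hκ : 0 < κ := lt_of_le_of_lt hρ hκρ
  set H0 := nsq (h 0) with hH0def
  set Hj := nsq (h j.succ) with hHjdef
  have hH0 : 0 ≤ H0 := nsq_nonneg' _
  have hHj : 0 ≤ Hj := nsq_nonneg' _
  set S := ∑ l ∈ univ.erase j, c l * nsq (h l.succ) with hSdef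
  have hS : 0 ≤ S := Finset.sum_nonneg fun l _ => mul_nonneg (hc l) (nsq_nonneg' _)
  set D := σ0sq * H0 * ρ + S * ρ + c j * Hj * κ + v with hDdef
  have hD : 0 < D := by
    have t1 : 0 ≤ σ0sq * H0 * ρ := mul_nonneg (mul_nonneg hσ0.le hH0) hρ
    have t2 : 0 ≤ S * ρ := mul_nonneg hS hρ
    have t3 : 0 ≤ c j * Hj * κ := mul_nonneg (mul_nonneg (hc j) hHj) hκ.le
    linarith
  refine ⟨hD, ?_⟩
  have hMpos : (0:ℝ) < (M:ℝ) := by exact_mod_cast Nat.lt_of_lt_of_le Nat.zero_lt_one hM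
  have key : ∀ r, quadForm (d r) (Gam h σ0sq c v)
      = σ0sq * ‖star (d r) ⬝ᵥ h 0‖ ^ 2
        + ∑ l : Fin N, c l * ‖star (d r) ⬝ᵥ h l.succ‖ ^ 2 + v * M := by
    intro r
    simp [Gam, quad_add, quad_smul, quad_sum, quad_outer, quad_one, hd r]
  have sum_split : ∀ r, ∑ l : Fin N, c l * ‖star (d r) ⬝ᵥ h l.succ‖ ^ 2
      = (∑ l ∈ univ.erase j, c l * ‖star (d r) ⬝ᵥ h l.succ‖ ^ 2)
        + c j * ‖star (d r) ⬝ᵥ h j.succ‖ ^ 2 := fun r =>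
    (Finset.sum_erase_add _ _ (mem_univ j)).symm
  have num_eq : quadForm (d 0) (Gam h σ0sq c v)
      = (M:ℝ) * (D + (σ0sq * H0 - c j * Hj) * (κ - ρ)) := by
    rw [key 0, sum_split 0, hdr 0,
      hds 0 j.succ (Fin.succ_ne_zero j).symm,
      Finset.sum_congr rfl fun l hl =>
        by rw [hds 0 l.succ (Fin.succ_ne_zero l).symm]]
    have : ∑ l ∈ univ.erase j, c l * (ρ * M * nsq (h l.succ)) = ρ * M * S := by
      rw [hSdef, Finset.mul_sum]
      exact Finset.sum_congr rfl fun l _ => by ring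
    rw [this, hDdef, hH0def, hHjdef]
    ring
  have den_eq : quadForm (d j.succ) (Gam h σ0sq c v) = (M:ℝ) * D := by
    rw [key j.succ, sum_split j.succ, hdr j.succ,
      hds j.succ 0 (Fin.succ_ne_zero j),
      Finset.sum_congr rfl fun l hl => by
        rw [hds j.succ l.succ fun e =>
          (Finset.mem_erase.mp hl).1 (Fin.succ_inj.mp e).symm]]
    have : ∑ l ∈ univ.erase j, c l * (ρ * M * nsq (h l.succ)) = ρ * M * S := by
      rw [hSdef, Finset.mul_sum]
      exact Finset.sum_congr rfl fun l _ => by ring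
    rw [this, hDdef, hH0def, hHjdef]
    ring
  rw [SIRj, num_eq, den_eq, mul_div_mul_left _ _ (ne_of_gt hMpos), add_div,
    div_self (ne_of_gt hD)]
end
end
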